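/- arXiv:2205.09815 — 3 statements merged into one kernel-verified Lean document; each statement's English description precedes it below -/
import Mathlib

section
/- Let T>0, σ>0, b∈ℝ, and γ∈ℝ with γ<1 and γ≠0, and set ρ = b²γ/(2σ²(1−γ)). Define u(t,x) = e^{ρ(T−t)} x^γ/γ on [0,T]×(0,∞). Then u solves the Merton Hamilton–Jacobi–Bellman equation: for every (t,x)∈[0,T)×(0,∞), ∂ₜu(t,x) + sup_{a∈ℝ} [ a x b ∂ₓu(t,x) + (1/2) a² x² σ² ∂ₓₓu(t,x) ] = 0, and u(T,x) = x^γ/γ for all x>0. -/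
/-- Merton HJB equation: `u(t,x) = e^{ρ(T−t)} x^γ/γ` with
`ρ = b²γ/(2σ²(1−γ))` solves
`∂ₜu + sup_{a∈ℝ}[a x b ∂ₓu + (1/2)a²x²σ²∂ₓₓu] = 0` on `[0,T)×(0,∞)`,
with terminal condition `u(T,x) = x^γ/γ`. -/
theorem merton_hjb_solution
    (T σ b γ : ℝ) (hT : 0 < T) (hσ : 0 < σ) (hγ1 : γ < 1) (hγ0 : γ ≠ 0)
    (ρ : ℝ) (hρ : ρ = b ^ 2 * γ / (2 * σ ^ 2 * (1 - γ)))
    (u : ℝ → ℝ → ℝ)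
    (hu : ∀ t x : ℝ, u t x = Real.exp (ρ * (T - t)) * x ^ γ / γ) :
    (∀ t x : ℝ, t ∈ Set.Ico (0 : ℝ) T → 0 < x →
      deriv (fun s => u s x) t
        + sSup {v : ℝ | ∃ a : ℝ,
            v = a * x * b * deriv (fun y => u t y) x
              + (1 / 2) * a ^ 2 * x ^ 2 * σ ^ 2 * deriv (deriv (fun y => u t y)) x}
        = 0)
    ∧ (∀ x : ℝ, 0 < x → u T x = x ^ γ / γ) := by
  constructor
  · intro t x ht hx
    have hxne : x ≠ 0 := ne_of_gt hx
    have hσne : σ ≠ 0 := ne_of_gt hσ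
    have h1γ : (0:ℝ) < 1 - γ := sub_pos.mpr hγ1
    have h1γne : (1:ℝ) - γ ≠ 0 := ne_of_gt h1γ
    have hE : 0 < Real.exp (ρ * (T - t)) := Real.exp_pos _
    have hP : 0 < x ^ γ := Real.rpow_pos_of_pos hx γ
    simp only [hu]
    -- time derivative
    have hdt : deriv (fun s => Real.exp (ρ * (T - s)) * x ^ γ / γ) t
        = Real.exp (ρ * (T - t)) * (ρ * -1) * x ^ γ / γ := by
      have h : HasDerivAt (fun s : ℝ => Real.exp (ρ * (T - s)) * x ^ γ / γ)
          (Real.exp (ρ * (T - t)) * (ρ * -1) * x ^ γ / γ) t :=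
        (((((hasDerivAt_id t).const_sub T).const_mul ρ).exp).mul_const _).div_const _
      exact h.deriv
    -- first spatial derivative, valid off 0
    have hdx : ∀ y : ℝ, y ≠ 0 →
        deriv (fun z => Real.exp (ρ * (T - t)) * z ^ γ / γ) y
          = Real.exp (ρ * (T - t)) * y ^ (γ - 1) := by
      intro y hy
      have h : HasDerivAt (fun z : ℝ => Real.exp (ρ * (T - t)) * z ^ γ / γ)
          (Real.exp (ρ * (T - t)) * (γ * y ^ (γ - 1)) / γ) y :=
        ((Real.hasDerivAt_rpow_const (Or.inl hy)).const_mul _).div_const _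
      rw [h.deriv]; field_simp
    -- second spatial derivative
    have hdxx : deriv (deriv (fun z => Real.exp (ρ * (T - t)) * z ^ γ / γ)) x
        = Real.exp (ρ * (T - t)) * ((γ - 1) * x ^ (γ - 1 - 1)) := by
      have hev : deriv (fun z => Real.exp (ρ * (T - t)) * z ^ γ / γ)
          =ᶠ[nhds x] fun y => Real.exp (ρ * (T - t)) * y ^ (γ - 1) := by
        filter_upwards [eventually_ne_nhds hxne] with y hy
        exact hdx y hy
      rw [hev.deriv_eq]
      exact ((Real.hasDerivAt_rpow_const (Or.inl hxne)).const_mul _).deriv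
    rw [hdt, hdx x hxne, hdxx]
    -- power identities
    have h1 : x ^ (γ - 1) * x = x ^ γ := by
      rw [← Real.rpow_add_one hxne]; norm_num
    have h2 : x ^ (γ - 1 - 1) * x ^ 2 = x ^ γ := by
      rw [pow_two, ← mul_assoc, ← Real.rpow_add_one hxne, ← Real.rpow_add_one hxne]
      congr 1; ring
    have t1 : ∀ a : ℝ, a * x * b * (Real.exp (ρ * (T - t)) * x ^ (γ - 1))
        = a * b * Real.exp (ρ * (T - t)) * x ^ γ := by
      intro a
      calc a * x * b * (Real.exp (ρ * (T - t)) * x ^ (γ - 1))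
          = a * b * Real.exp (ρ * (T - t)) * (x ^ (γ - 1) * x) := by ring
        _ = a * b * Real.exp (ρ * (T - t)) * x ^ γ := by rw [h1]
    have t2 : ∀ a : ℝ, (1:ℝ) / 2 * a ^ 2 * x ^ 2 * σ ^ 2 *
          (Real.exp (ρ * (T - t)) * ((γ - 1) * x ^ (γ - 1 - 1)))
        = (1:ℝ) / 2 * a ^ 2 * σ ^ 2 * Real.exp (ρ * (T - t)) * (γ - 1) * x ^ γ := by
      intro a
      calc (1:ℝ) / 2 * a ^ 2 * x ^ 2 * σ ^ 2 *
            (Real.exp (ρ * (T - t)) * ((γ - 1) * x ^ (γ - 1 - 1)))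
          = (1:ℝ) / 2 * a ^ 2 * σ ^ 2 * Real.exp (ρ * (T - t)) * (γ - 1) *
              (x ^ (γ - 1 - 1) * x ^ 2) := by ring
        _ = _ := by rw [h2]
    have hgreat : IsGreatest
        {v : ℝ | ∃ a : ℝ,
            v = a * x * b * (Real.exp (ρ * (T - t)) * x ^ (γ - 1))
              + 1 / 2 * a ^ 2 * x ^ 2 * σ ^ 2 *
                  (Real.exp (ρ * (T - t)) * ((γ - 1) * x ^ (γ - 1 - 1)))}
        (b ^ 2 * Real.exp (ρ * (T - t)) * x ^ γ / (2 * σ ^ 2 * (1 - γ))) := by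
      constructor
      · refine ⟨b / (σ ^ 2 * (1 - γ)), ?_⟩
        rw [t1, t2]
        field_simp
        ring
      · rintro v ⟨a, rfl⟩
        rw [t1, t2]
        rw [le_div_iff₀ (by positivity : (0:ℝ) < 2 * σ ^ 2 * (1 - γ))]
        nlinarith [mul_nonneg (mul_pos hE hP).le (sq_nonneg (b - a * σ ^ 2 * (1 - γ)))]
    rw [hgreat.csSup_eq]
    rw [hρ]
    field_simp
    ring
  · intro x hx
    rw [hu]
    simp
end

section
/- Let σ>0, λ>0, x>0 and γ∈ℝ with λx²γ<1. Then sup_{a∈[0,∞)} [ (1/2) a x² γ − (1/(2λ)) (√a − σ)² ] = σ² x² γ / (2(1 − λ x² γ)). In other words, the market-impact Hamiltonian H(x,γ) admits the Bellman (dual) representation H(x,γ) = sup_{a≥0} [ (1/2) a x² γ − (1/(2λ))(√a − σ)² ] on its finiteness domain. -/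
/-!
Substituting `s = √a`, the objective becomes the concave quadratic
`½ k s² − (s − σ)² / (2λ)` in `s ≥ 0`, where `k = x²γ`. Completing the square gives
`σ² k − 2 (1 − λk) · objective = (s (1 − λk) − σ)² / λ`, so when `λk < 1` the objective is at
most `σ² k / (2 (1 − λk))`, with equality at `s = σ / (1 − λk) ≥ 0`.
-/

noncomputable def impactObjective (σ lam k s : ℝ) : ℝ :=
  (1 / 2) * s ^ 2 * k - (1 / (2 * lam)) * (s - σ) ^ 2

lemma sq_gap_impactObjective {σ lam : ℝ} (k s : ℝ) (hlam : lam ≠ 0) :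
    σ ^ 2 * k - 2 * (1 - lam * k) * impactObjective σ lam k s
      = (s * (1 - lam * k) - σ) ^ 2 / lam := by
  unfold impactObjective
  field_simp
  ring

lemma impactObjective_le {σ lam k : ℝ} (s : ℝ) (hlam : 0 < lam) (hk : lam * k < 1) :
    impactObjective σ lam k s ≤ σ ^ 2 * k / (2 * (1 - lam * k)) := by
  have hgap := sq_gap_impactObjective (σ := σ) k s hlam.ne'
  have hsq : 0 ≤ (s * (1 - lam * k) - σ) ^ 2 / lam := by positivity
  rw [le_div_iff₀ (by linarith)]
  linarith

lemma impactObjective_optimum {σ lam k : ℝ} (hlam : lam ≠ 0) (hk : lam * k ≠ 1) :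
    impactObjective σ lam k (σ / (1 - lam * k)) = σ ^ 2 * k / (2 * (1 - lam * k)) := by
  have h : 1 - lam * k ≠ 0 := sub_ne_zero.mpr (Ne.symm hk)
  unfold impactObjective
  field_simp
  ring

lemma isGreatest_impactObjective_image_Ici {σ lam k : ℝ} (hσ : 0 ≤ σ) (hlam : 0 < lam)
    (hk : lam * k < 1) :
    IsGreatest (impactObjective σ lam k '' Set.Ici 0) (σ ^ 2 * k / (2 * (1 - lam * k))) :=
  ⟨⟨σ / (1 - lam * k), div_nonneg hσ (by linarith),
      impactObjective_optimum hlam.ne' hk.ne⟩,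
    by rintro _ ⟨s, -, rfl⟩; exact impactObjective_le s hlam hk⟩

theorem market_impact_hamiltonian_dual_general
    (σ lam x γ : ℝ) (hσ : 0 < σ) (hlam : 0 < lam)
    (hγ : lam * x ^ 2 * γ < 1) :
    sSup {v : ℝ | ∃ a : ℝ, 0 ≤ a ∧
        v = (1 / 2) * a * x ^ 2 * γ - (1 / (2 * lam)) * (Real.sqrt a - σ) ^ 2}
      = σ ^ 2 * x ^ 2 * γ / (2 * (1 - lam * x ^ 2 * γ)) := by
  have hset : {v : ℝ | ∃ a : ℝ, 0 ≤ a ∧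
        v = (1 / 2) * a * x ^ 2 * γ - (1 / (2 * lam)) * (Real.sqrt a - σ) ^ 2}
      = impactObjective σ lam (x ^ 2 * γ) '' Set.Ici 0 := by
    ext v
    constructor
    · rintro ⟨a, ha, rfl⟩
      refine ⟨Real.sqrt a, Real.sqrt_nonneg a, ?_⟩
      rw [impactObjective, Real.sq_sqrt ha]
      ring
    · rintro ⟨s, hs, rfl⟩
      refine ⟨s ^ 2, sq_nonneg s, ?_⟩
      rw [impactObjective, Real.sqrt_sq hs]
      ring
  rw [hset, (isGreatest_impactObjective_image_Ici hσ.le hlam (by linarith)).csSup_eq]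
  ring

/-- Dual (Bellman) representation of the market-impact Hamiltonian: for `λx²γ < 1`,
`sup_{a ≥ 0} [ (1/2) a x² γ − (1/(2λ)) (√a − σ)² ] = σ² x² γ / (2(1 − λ x² γ))`. -/
theorem market_impact_hamiltonian_dual
    (σ lam x γ : ℝ) (hσ : 0 < σ) (hlam : 0 < lam) (hx : 0 < x)
    (hγ : lam * x ^ 2 * γ < 1) :
    sSup {v : ℝ | ∃ a : ℝ, 0 ≤ a ∧
        v = (1 / 2) * a * x ^ 2 * γ - (1 / (2 * lam)) * (Real.sqrt a - σ) ^ 2}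
      = σ ^ 2 * x ^ 2 * γ / (2 * (1 - lam * x ^ 2 * γ)) :=
  market_impact_hamiltonian_dual_general σ lam x γ hσ hlam hγ
end

section
/- Let σ>0, λ>0, x>0 and a≥0. Then inf over γ∈ℝ with λx²γ<1 of [ σ²x²γ/(2(1−λx²γ)) − (1/2) a x² γ ] equals −(√a − σ)²/(2λ). That is, the concave conjugate in γ of the market-impact Hamiltonian H(x,·) at the slope (1/2)ax² is the running cost f(a) = −(√a−σ)²/(2λ) appearing in the dual stochastic control representation. -/
/-!
Substituting `t = 1 - λx²γ > 0` turns the objective into the affine image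
`((σ²/t + a t) - (σ² + a)) / (2λ)`, an increasing function of `σ²/t + a t`. By AM–GM
`σ²/t + a t - 2σ√a = (σ - √a t)²/t ≥ 0`, with equality at `t = σ/√a` when `a > 0`, and
approached as `t → ∞` when `a = 0`; and `(2σ√a - σ² - a)/(2λ) = -(√a - σ)²/(2λ)`.
-/

open Set Filter Topology

lemma isGLB_sq_div_add_mul_image_Ioi {b a : ℝ} (hb : 0 < b) (ha : 0 ≤ a) :
    IsGLB ((fun t => b ^ 2 / t + a * t) '' Ioi 0) (2 * b * √a) := by
  refine ⟨?_, fun c hc => ?_⟩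
  · rintro _ ⟨t, ht : 0 < t, rfl⟩
    have hsq : b ^ 2 / t + a * t - 2 * b * √a = (b - √a * t) ^ 2 / t := by
      field_simp
      linear_combination -t ^ 2 * Real.sq_sqrt ha
    have : 0 ≤ (b - √a * t) ^ 2 / t := by positivity
    linarith
  have hc' : ∀ t > 0, c ≤ b ^ 2 / t + a * t := fun t ht => hc ⟨t, ht, rfl⟩
  rcases ha.eq_or_lt with rfl | ha
  · have hlim : Tendsto (fun t : ℝ => b ^ 2 / t) atTop (𝓝 0) :=
      tendsto_const_nhds.div_atTop tendsto_id
    have hc'' : ∀ᶠ t in atTop, c ≤ b ^ 2 / t :=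
      (eventually_gt_atTop 0).mono fun t ht => by simpa using hc' t ht
    simpa using ge_of_tendsto hlim hc''
  · have hs : 0 < √a := Real.sqrt_pos.2 ha
    convert hc' (b / √a) (by positivity) using 1
    field_simp
    rw [Real.sq_sqrt ha.le]
    ring

lemma marketImpact_objective_eq_image {σ lam x a : ℝ} (hlam : lam ≠ 0) (hx : x ≠ 0) :
    {v : ℝ | ∃ γ : ℝ, lam * x ^ 2 * γ < 1 ∧
        v = σ ^ 2 * x ^ 2 * γ / (2 * (1 - lam * x ^ 2 * γ)) - (1 / 2) * a * x ^ 2 * γ}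
      = (fun u => (u - (σ ^ 2 + a)) / (2 * lam)) '' ((fun t => σ ^ 2 / t + a * t) '' Ioi 0) := by
  rw [image_image]
  ext v
  constructor
  · rintro ⟨γ, hγ, rfl⟩
    have ht : 1 - lam * x ^ 2 * γ ≠ 0 := (sub_pos.2 hγ).ne'
    refine ⟨1 - lam * x ^ 2 * γ, sub_pos.2 hγ, ?_⟩
    field_simp
    ring
  · rintro ⟨t, ht : 0 < t, rfl⟩
    have hγ : lam * x ^ 2 * ((1 - t) / (lam * x ^ 2)) = 1 - t := by field_simp
    refine ⟨(1 - t) / (lam * x ^ 2), by linarith, ?_⟩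
    rw [hγ, sub_sub_cancel]
    field_simp
    ring

/-- The concave conjugate in `γ` of the market-impact Hamiltonian at slope `(1/2)ax²`:
`inf_{γ : λx²γ<1} [ σ²x²γ/(2(1−λx²γ)) − (1/2) a x² γ ] = −(√a − σ)²/(2λ)` for `a ≥ 0`. -/
theorem market_impact_concave_conjugate
    (σ lam x a : ℝ) (hσ : 0 < σ) (hlam : 0 < lam) (hx : 0 < x) (ha : 0 ≤ a) :
    sInf {v : ℝ | ∃ γ : ℝ, lam * x ^ 2 * γ < 1 ∧
        v = σ ^ 2 * x ^ 2 * γ / (2 * (1 - lam * x ^ 2 * γ)) - (1 / 2) * a * x ^ 2 * γ}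
      = -(Real.sqrt a - σ) ^ 2 / (2 * lam) := by
  let e : ℝ ≃o ℝ :=
    (OrderIso.addRight (-(σ ^ 2 + a))).trans (OrderIso.divRight₀ (2 * lam) (by positivity))
  have he : ∀ u, e u = (u - (σ ^ 2 + a)) / (2 * lam) := fun u => by simp [e, sub_eq_add_neg]
  rw [marketImpact_objective_eq_image hlam.ne' hx.ne', ← funext he]
  have hglb := e.isGLB_image'.2 (isGLB_sq_div_add_mul_image_Ioi hσ ha)
  rw [hglb.csInf_eq ((nonempty_Ioi.image _).image _), he]
  linear_combination Real.sq_sqrt ha / (2 * lam)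
end
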